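/- Let N ≥ 2, let v ∈ C_c^∞(B^N, ℝ) (smooth with compact support in the open unit ball), and let v̌ be its symmetrization, v̌(r) = −∫_r^1 ( ⨍_{S^{N−1}} |∇v(sθ)|² dσ(θ) )^{1/2} ds. Then for every 1 ≤ p ≤ 2 and every r ∈ (0,1), ∫_{S^{N−1}} |v̌(rθ)|^p dσ(θ) ≥ ∫_{S^{N−1}} |v(rθ)|^p dσ(θ). -/

import Mathlib

open MeasureTheory Metric Set

noncomputable section

/-- `ℝ^N` with the Euclidean structure. -/
abbrev Euc (N : ℕ) : Type := EuclideanSpace ℝ (Fin N)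

/-- The surface measure `σ` on the unit sphere `S^{N-1} ⊆ ℝ^N`. -/
def sphMeasure (N : ℕ) : Measure (Metric.sphere (0 : Euc N) 1) :=
  (volume : Measure (Euc N)).toSphere

/-- The Laplacian `Δ v` of a scalar function on `ℝ^N`. -/
def lap {N : ℕ} (v : Euc N → ℝ) (x : Euc N) : ℝ :=
  ∑ i : Fin N, fderiv ℝ (fun y => fderiv ℝ v y (EuclideanSpace.single i 1)) x
    (EuclideanSpace.single i 1)

/-- The squared Frobenius norm `|∇U|²` of the differential of a map `U`. -/
def gradSq {N M : ℕ} (U : Euc N → Euc M) (x : Euc N) : ℝ :=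
  ∑ i : Fin N, ‖fderiv ℝ U x (EuclideanSpace.single i 1)‖ ^ 2

/-- Spherical average `⨍_{S^{N-1}} |∇v(sθ)|² dσ(θ)` of the squared gradient of `v`. -/
def sAvg {N : ℕ} (v : Euc N → ℝ) (s : ℝ) : ℝ :=
  ⨍ θ : Metric.sphere (0 : Euc N) 1, ‖gradient v (s • (θ : Euc N))‖ ^ 2 ∂(sphMeasure N)

/-- The symmetrization `v̌(r) = -∫_r^1 (⨍_{S^{N-1}} |∇v(sθ)|² dσ(θ))^{1/2} ds`. -/
def vCheck {N : ℕ} (v : Euc N → ℝ) (r : ℝ) : ℝ :=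
  -∫ s in Ioc r 1, Real.sqrt (sAvg v s)

/-- The gradient of the symmetrization: `∇v̌(rθ) = (⨍_{S^{N-1}} |∇v(rθ')|² dσ(θ'))^{1/2} θ`. -/
def gradCheck {N : ℕ} (v : Euc N → ℝ) (x : Euc N) : Euc N :=
  Real.sqrt (sAvg v ‖x‖) • (‖x‖⁻¹ • x)

/-- The Laplacian of the radial symmetrization: `Δv̌(rθ) = v̌''(r) + (N-1)/r · v̌'(r)`,
where `v̌'(r) = √(sAvg v r)`. -/
def lapCheck {N : ℕ} (v : Euc N → ℝ) (x : Euc N) : ℝ :=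
  deriv (fun s => Real.sqrt (sAvg v s)) ‖x‖ + ((N : ℝ) - 1) / ‖x‖ * Real.sqrt (sAvg v ‖x‖)

/-- Fundamental theorem of calculus bound: `|v(rθ)| ≤ ∫_r^1 ‖∇v(sθ)‖ ds`. -/
lemma ftc_pointwise_bound {N : ℕ} (v : Euc N → ℝ) (hv : ContDiff ℝ (⊤ : ℕ∞) v)
    (hvsub : tsupport v ⊆ ball (0 : Euc N) 1) {r : ℝ} (hr1 : r ≤ 1)
    (θ : Metric.sphere (0 : Euc N) 1) :
    |v (r • (θ : Euc N))| ≤ ∫ s in Ioc r 1, ‖gradient v (s • (θ : Euc N))‖ := by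
  set c : Euc N := (θ : Euc N) with hc
  have hcn : ‖c‖ = 1 := mem_sphere_zero_iff_norm.mp θ.2
  have hdiff : ∀ s : ℝ, HasDerivAt (fun t => v (t • c)) ((fderiv ℝ v (s • c)) c) s := by
    intro s
    have h1 : HasFDerivAt v (fderiv ℝ v (s • c)) (s • c) :=
      (hv.differentiable (by simp)).differentiableAt.hasFDerivAt
    have h2 : HasDerivAt (fun t : ℝ => t • c) c s := by
      simpa using (hasDerivAt_id s).smul_const c
    exact h1.comp_hasDerivAt s h2
  have hcd : Continuous fun s : ℝ => (fderiv ℝ v (s • c)) c :=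
    ((hv.continuous_fderiv (by simp)).comp (continuous_id.smul continuous_const)).clm_apply
      continuous_const
  have hFTC : ∫ s in r..1, (fderiv ℝ v (s • c)) c = v ((1:ℝ) • c) - v (r • c) :=
    intervalIntegral.integral_eq_sub_of_hasDerivAt (fun s _ => hdiff s)
      (hcd.intervalIntegrable r 1)
  have hv1 : v ((1:ℝ) • c) = 0 := by
    rw [one_smul]
    apply image_eq_zero_of_notMem_tsupport
    intro hmem
    have := hvsub hmem
    rw [mem_ball, dist_zero_right, hcn] at this
    exact lt_irrefl 1 this
  have hGc : Continuous fun s : ℝ => ‖gradient v (s • c)‖ := by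
    have : Continuous (gradient v) := by
      unfold gradient
      exact (InnerProductSpace.toDual ℝ (Euc N)).symm.continuous.comp
        (hv.continuous_fderiv (by simp))
    exact (this.comp (continuous_id.smul continuous_const)).norm
  calc |v (r • c)| = |∫ s in r..1, (fderiv ℝ v (s • c)) c| := by
        rw [hFTC, hv1, zero_sub, abs_neg]
    _ ≤ ∫ s in r..1, |(fderiv ℝ v (s • c)) c| :=
        intervalIntegral.abs_integral_le_integral_abs hr1
    _ ≤ ∫ s in r..1, ‖gradient v (s • c)‖ := by
        apply intervalIntegral.integral_mono_on hr1
          (hcd.abs.intervalIntegrable r 1) (hGc.intervalIntegrable r 1)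
        intro s _
        calc |(fderiv ℝ v (s • c)) c| ≤ ‖fderiv ℝ v (s • c)‖ * ‖c‖ :=
              (fderiv ℝ v (s • c)).le_opNorm c
          _ = ‖gradient v (s • c)‖ := by
              rw [hcn, mul_one]
              exact (LinearIsometryEquiv.norm_map
                (InnerProductSpace.toDual ℝ (Euc N)).symm _).symm
    _ = ∫ s in Ioc r 1, ‖gradient v (s • c)‖ := intervalIntegral.integral_of_le hr1

set_option maxHeartbeats 2000000 in
/-- Theorem 1.5 (iii): for `v` smooth with compact support in the unit ball
and `1 ≤ p ≤ 2`, the symmetrization increases the spherical `L^p` norms of `v`. -/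
theorem symmetrization_increases_Lp_on_spheres
    {N : ℕ} (hN : 2 ≤ N) (v : Euc N → ℝ)
    (hv : ContDiff ℝ (⊤ : ℕ∞) v) (hvsupp : HasCompactSupport v)
    (hvsub : tsupport v ⊆ ball (0 : Euc N) 1)
    (p : ℝ) (hp1 : 1 ≤ p) (hp2 : p ≤ 2) :
    ∀ r ∈ Ioo (0 : ℝ) 1,
      (∫ θ : Metric.sphere (0 : Euc N) 1, |v (r • (θ : Euc N))| ^ p ∂(sphMeasure N))
        ≤ ∫ _θ : Metric.sphere (0 : Euc N) 1, |vCheck v r| ^ p ∂(sphMeasure N) := by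
  intro r hr
  obtain ⟨hr0, hr1⟩ := hr
  have hp0 : 0 < p := lt_of_lt_of_le one_pos hp1
  haveI hfin : IsFiniteMeasure (sphMeasure N) :=
    inferInstanceAs (IsFiniteMeasure (volume : Measure (Euc N)).toSphere)
  have hm0 : (sphMeasure N) univ ≠ 0 := by
    rw [sphMeasure, Measure.toSphere_apply_univ]
    refine mul_ne_zero ?_ ?_
    · simp [finrank_euclideanSpace_fin]; omega
    · exact (measure_ball_pos volume (0 : Euc N) one_pos).ne'
  haveI : NeZero (sphMeasure N) := ⟨by
    intro h
    exact hm0 (by simp [h])⟩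
  set m : ℝ := ((sphMeasure N) univ).toReal with hmdef
  have hmpos : 0 < m := ENNReal.toReal_pos hm0 (measure_ne_top _ _)
  -- continuity and boundedness of the gradient
  have hgradc : Continuous (gradient v) := by
    unfold gradient
    exact (InnerProductSpace.toDual ℝ (Euc N)).symm.continuous.comp
      (hv.continuous_fderiv (by simp))
  have hnormgrad : ∀ x : Euc N, ‖gradient v x‖ = ‖fderiv ℝ v x‖ := fun x =>
    LinearIsometryEquiv.norm_map _ _
  obtain ⟨C0, hC0⟩ := (hvsupp.fderiv (𝕜 := ℝ)).exists_bound_of_continuous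
    (hv.continuous_fderiv (by simp))
  set C : ℝ := max C0 0 with hCdef
  have hCnn : 0 ≤ C := le_max_right _ _
  have hC : ∀ x : Euc N, ‖gradient v x‖ ≤ C := fun x =>
    (hnormgrad x).le.trans ((hC0 x).trans (le_max_left _ _))
  -- the basic functions
  set G : ℝ → Metric.sphere (0 : Euc N) 1 → ℝ :=
    fun s θ => ‖gradient v (s • (θ : Euc N))‖ with hGdef
  have hGcont : Continuous fun q : ℝ × Metric.sphere (0 : Euc N) 1 => G q.1 q.2 :=
    (hgradc.comp (continuous_fst.smul (continuous_subtype_val.comp continuous_snd))).norm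
  have hGs : ∀ s : ℝ, Continuous fun θ => G s θ := fun s =>
    (hgradc.comp (continuous_subtype_val.const_smul s)).norm
  have hGθ : ∀ θ, Continuous fun s => G s θ := fun θ =>
    (hgradc.comp (continuous_id.smul continuous_const)).norm
  have hG0 : ∀ s θ, 0 ≤ G s θ := fun s θ => norm_nonneg _
  have hGb : ∀ s θ, G s θ ≤ C := fun s θ => hC _
  -- integrability of continuous functions on the sphere
  have hintc : ∀ f : Metric.sphere (0 : Euc N) 1 → ℝ, Continuous f →
      Integrable f (sphMeasure N) := fun f hf =>
    hf.integrable_of_hasCompactSupport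
      (IsCompact.of_isClosed_subset isCompact_univ (isClosed_tsupport f) (subset_univ _))
  -- Q s = ∫ G s θ ^ 2 and its relation to sAvg
  set Q : ℝ → ℝ := fun s => ∫ θ, (G s θ) ^ 2 ∂(sphMeasure N) with hQdef
  have hQ0 : ∀ s, 0 ≤ Q s := fun s => integral_nonneg fun θ => sq_nonneg _
  have hsAvg : ∀ s, sAvg v s = m⁻¹ * Q s := by
    intro s
    rw [sAvg, average_eq, smul_eq_mul]
    rfl
  have hQcont : Continuous Q := by
    apply continuous_of_dominated (F := fun (s : ℝ) θ => G s θ ^ 2) (bound := fun _ => C ^ 2)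
    · exact fun s => ((hGs s).pow 2).aestronglyMeasurable
    · intro s
      filter_upwards with θ
      rw [Real.norm_eq_abs, abs_of_nonneg (sq_nonneg _)]
      exact pow_le_pow_left₀ (hG0 s θ) (hGb s θ) 2
    · exact integrable_const _
    · filter_upwards with θ
      exact (hGθ θ).pow 2
  -- A = √(sAvg)
  set A : ℝ → ℝ := fun s => Real.sqrt (sAvg v s) with hAdef
  have hA0 : ∀ s, 0 ≤ A s := fun s => Real.sqrt_nonneg _
  have hAcont : Continuous A := by
    have : A = fun s => Real.sqrt (m⁻¹ * Q s) := by
      funext s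
      show Real.sqrt (sAvg v s) = _
      rw [hsAvg s]
    rw [this]
    exact Real.continuous_sqrt.comp (continuous_const.mul hQcont)
  have hsqrtQ : ∀ s, Real.sqrt (Q s) = Real.sqrt m * A s := by
    intro s
    show Real.sqrt (Q s) = Real.sqrt m * Real.sqrt (sAvg v s)
    rw [hsAvg s, ← Real.sqrt_mul hmpos.le]
    congr 1
    field_simp
  -- the measure P on (r,1]
  set P : Measure ℝ := volume.restrict (Ioc r 1) with hPdef
  haveI hPfin : IsFiniteMeasure P := ⟨by
    rw [hPdef, Measure.restrict_apply_univ]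
    exact measure_Ioc_lt_top⟩
  have hAP : Integrable A P := hAcont.integrableOn_Ioc
  set J : ℝ := ∫ s, A s ∂P with hJdef
  have hJ0 : 0 ≤ J := integral_nonneg fun s => hA0 s
  have hvCheckJ : |vCheck v r| = J := by
    rw [vCheck, abs_neg]
    exact abs_of_nonneg (setIntegral_nonneg measurableSet_Ioc fun s _ => Real.sqrt_nonneg _)
  -- F θ = ∫_r^1 G s θ ds
  set F : Metric.sphere (0 : Euc N) 1 → ℝ := fun θ => ∫ s, G s θ ∂P with hFdef
  have hF0 : ∀ θ, 0 ≤ F θ := fun θ => integral_nonneg fun s => hG0 s θ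
  have hpt : ∀ θ : Metric.sphere (0 : Euc N) 1, |v (r • (θ : Euc N))| ≤ F θ := fun θ =>
    ftc_pointwise_bound v hv hvsub hr1.le θ
  have hFcont : Continuous F := by
    apply continuous_of_dominated
      (F := fun (θ : Metric.sphere (0 : Euc N) 1) (s : ℝ) => G s θ) (bound := fun _ => C)
    · exact fun θ => ((hGθ θ).aestronglyMeasurable).restrict
    · intro θ
      filter_upwards with s
      rw [Real.norm_eq_abs, abs_of_nonneg (hG0 s θ)]
      exact hGb s θ
    · exact integrable_const _
    · filter_upwards with s
      exact hGs s
  -- make everything opaque from here on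
  clear_value G Q A F
  -- Cauchy–Schwarz on the sphere
  have hmem2 : ∀ s : ℝ, MemLp (fun θ => G s θ) (ENNReal.ofReal 2) (sphMeasure N) := by
    intro s
    apply MemLp.of_bound (hGs s).aestronglyMeasurable C
    filter_upwards with θ
    rw [Real.norm_eq_abs, abs_of_nonneg (hG0 s θ)]
    exact hGb s θ
  have hCS : ∀ s t : ℝ, (∫ θ, G s θ * G t θ ∂(sphMeasure N)) ≤ m * (A s * A t) := by
    intro s t
    have h22 : Real.HolderConjugate 2 2 := Real.HolderConjugate.two_two
    have h1 := integral_mul_le_Lp_mul_Lq_of_nonneg h22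
      (ae_of_all _ fun θ => hG0 s θ) (ae_of_all _ fun θ => hG0 t θ) (hmem2 s) (hmem2 t)
    have hrw : ∀ u : ℝ, (∫ θ, G u θ ^ (2:ℝ) ∂(sphMeasure N)) = Q u := by
      intro u
      rw [hQdef]
      congr 1
      funext θ
      rw [Real.rpow_two]
    rw [hrw s, hrw t] at h1
    calc (∫ θ, G s θ * G t θ ∂(sphMeasure N))
        ≤ Q s ^ (1/2 : ℝ) * Q t ^ (1/2 : ℝ) := h1
      _ = Real.sqrt (Q s) * Real.sqrt (Q t) := by
          rw [← Real.sqrt_eq_rpow, ← Real.sqrt_eq_rpow]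
      _ = (Real.sqrt m * A s) * (Real.sqrt m * A t) := by rw [hsqrtQ s, hsqrtQ t]
      _ = (Real.sqrt m * Real.sqrt m) * (A s * A t) := by ring
      _ = m * (A s * A t) := by rw [Real.mul_self_sqrt hmpos.le]
  -- the product integrability
  have hGGcont : Continuous fun q : (Metric.sphere (0 : Euc N) 1) × (ℝ × ℝ) =>
      G q.2.1 q.1 * G q.2.2 q.1 := by
    have c1 : Continuous fun q : (Metric.sphere (0 : Euc N) 1) × (ℝ × ℝ) => G q.2.1 q.1 :=
      hGcont.comp ((continuous_fst.comp continuous_snd).prodMk continuous_fst)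
    have c2 : Continuous fun q : (Metric.sphere (0 : Euc N) 1) × (ℝ × ℝ) => G q.2.2 q.1 :=
      hGcont.comp ((continuous_snd.comp continuous_snd).prodMk continuous_fst)
    exact c1.mul c2
  have hGGint : Integrable (fun q : (Metric.sphere (0 : Euc N) 1) × (ℝ × ℝ) =>
      G q.2.1 q.1 * G q.2.2 q.1) ((sphMeasure N).prod (P.prod P)) := by
    apply Integrable.mono' (integrable_const (C * C)) hGGcont.aestronglyMeasurable
    filter_upwards with q
    rw [Real.norm_eq_abs, abs_of_nonneg (mul_nonneg (hG0 _ _) (hG0 _ _))]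
    exact mul_le_mul (hGb _ _) (hGb _ _) (hG0 _ _) hCnn
  -- key estimate: ∫ F² ≤ m * J²
  have hIF : (∫ θ, F θ * F θ ∂(sphMeasure N)) ≤ m * (J * J) := by
    have hFsq : ∀ θ, F θ * F θ = ∫ z : ℝ × ℝ, G z.1 θ * G z.2 θ ∂(P.prod P) := by
      intro θ
      rw [hFdef]
      exact (integral_prod_mul (fun s => G s θ) (fun t => G t θ)).symm
    have hswap : (∫ θ, (∫ z : ℝ × ℝ, G z.1 θ * G z.2 θ ∂(P.prod P)) ∂(sphMeasure N))
        = ∫ z : ℝ × ℝ, (∫ θ, G z.1 θ * G z.2 θ ∂(sphMeasure N)) ∂(P.prod P) :=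
      integral_integral_swap hGGint
    calc (∫ θ, F θ * F θ ∂(sphMeasure N))
        = ∫ θ, (∫ z : ℝ × ℝ, G z.1 θ * G z.2 θ ∂(P.prod P)) ∂(sphMeasure N) := by
          exact integral_congr_ae (ae_of_all _ hFsq)
      _ = ∫ z : ℝ × ℝ, (∫ θ, G z.1 θ * G z.2 θ ∂(sphMeasure N)) ∂(P.prod P) := hswap
      _ ≤ ∫ z : ℝ × ℝ, m * (A z.1 * A z.2) ∂(P.prod P) := by
          apply integral_mono hGGint.integral_prod_right
            ((hAP.mul_prod hAP).const_mul m)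
          intro z
          exact hCS z.1 z.2
      _ = m * (J * J) := by
          rw [integral_const_mul, integral_prod_mul, hJdef]
  -- ∫ |v|² ≤ ∫ F²
  have hvc : Continuous fun θ : Metric.sphere (0 : Euc N) 1 => |v (r • (θ : Euc N))| :=
    (hv.continuous.comp (continuous_subtype_val.const_smul r)).abs
  have hI2 : (∫ θ, |v (r • (θ : Euc N))| ^ (2:ℝ) ∂(sphMeasure N))
      ≤ ∫ θ, F θ * F θ ∂(sphMeasure N) := by
    apply integral_mono
    · exact hintc _ (hvc.rpow_const fun θ => Or.inr (by norm_num))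
    · exact hintc _ (hFcont.mul hFcont)
    · intro θ
      show |v (r • (θ : Euc N))| ^ (2:ℝ) ≤ F θ * F θ
      rw [Real.rpow_two, pow_two]
      exact mul_le_mul (hpt θ) (hpt θ) (abs_nonneg _) (hF0 θ)
  -- Jensen's inequality
  have h2p : 1 ≤ 2 / p := (one_le_div hp0).mpr hp2
  have hjen : ((⨍ θ, |v (r • (θ : Euc N))| ^ p ∂(sphMeasure N)) : ℝ) ^ (2/p : ℝ)
      ≤ ⨍ θ, (|v (r • (θ : Euc N))| ^ p) ^ (2/p : ℝ) ∂(sphMeasure N) := by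
    have hconv : ConvexOn ℝ (Ici 0) fun x : ℝ => x ^ (2/p : ℝ) := convexOn_rpow h2p
    have hcont : ContinuousOn (fun x : ℝ => x ^ (2/p : ℝ)) (Ici 0) := fun x _ =>
      (Real.continuousAt_rpow_const x _ (Or.inr (by positivity))).continuousWithinAt
    exact ConvexOn.map_average_le hconv hcont isClosed_Ici
      (ae_of_all _ fun θ => Real.rpow_nonneg (abs_nonneg _) _)
      (hintc _ (hvc.rpow_const fun θ => Or.inr hp0.le))
      (hintc _ ((hvc.rpow_const fun θ => Or.inr hp0.le).rpow_const
        fun θ => Or.inr (by positivity)))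
  have hjrw : (⨍ θ, (|v (r • (θ : Euc N))| ^ p) ^ (2/p : ℝ) ∂(sphMeasure N))
      = ⨍ θ, |v (r • (θ : Euc N))| ^ (2:ℝ) ∂(sphMeasure N) := by
    congr 1
    funext θ
    rw [← Real.rpow_mul (abs_nonneg _)]
    congr 1
    field_simp
  rw [hjrw] at hjen
  -- put everything together
  set Ip : ℝ := ∫ θ, |v (r • (θ : Euc N))| ^ p ∂(sphMeasure N) with hIpdef
  set I2 : ℝ := ∫ θ, |v (r • (θ : Euc N))| ^ (2:ℝ) ∂(sphMeasure N) with hI2def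
  have hIp0 : 0 ≤ Ip := integral_nonneg fun θ => Real.rpow_nonneg (abs_nonneg _) _
  have hI20 : 0 ≤ I2 := integral_nonneg fun θ => Real.rpow_nonneg (abs_nonneg _) _
  have havg_p : (⨍ θ, |v (r • (θ : Euc N))| ^ p ∂(sphMeasure N)) = m⁻¹ * Ip := by
    rw [average_eq, smul_eq_mul]
    rfl
  have havg_2 : (⨍ θ, |v (r • (θ : Euc N))| ^ (2:ℝ) ∂(sphMeasure N)) = m⁻¹ * I2 := by
    rw [average_eq, smul_eq_mul]
    rfl
  rw [havg_p, havg_2] at hjen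
  -- m⁻¹ * I2 ≤ J * J
  have hI2J : m⁻¹ * I2 ≤ J * J := by
    have : I2 ≤ m * (J * J) := hI2.trans hIF
    calc m⁻¹ * I2 ≤ m⁻¹ * (m * (J * J)) := by
          exact mul_le_mul_of_nonneg_left this (inv_nonneg.mpr hmpos.le)
      _ = J * J := by field_simp
  -- conclude (m⁻¹ Ip)^{2/p} ≤ J², hence m⁻¹ Ip ≤ J^p
  have hJJ : (m⁻¹ * Ip) ^ (2/p : ℝ) ≤ J * J := hjen.trans hI2J
  have hmIp0 : 0 ≤ m⁻¹ * Ip := mul_nonneg (inv_nonneg.mpr hmpos.le) hIp0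
  have hfinal : m⁻¹ * Ip ≤ J ^ p := by
    have h1 : ((m⁻¹ * Ip) ^ (2/p : ℝ)) ^ (p/2 : ℝ) ≤ (J * J) ^ (p/2 : ℝ) :=
      Real.rpow_le_rpow (Real.rpow_nonneg hmIp0 _) hJJ (by positivity)
    have h2 : ((m⁻¹ * Ip) ^ (2/p : ℝ)) ^ (p/2 : ℝ) = m⁻¹ * Ip := by
      rw [← Real.rpow_mul hmIp0]
      rw [show (2/p) * (p/2) = 1 by rw [div_mul_div_comm, mul_comm]; exact div_self (by positivity)]
      exact Real.rpow_one _
    have h3 : (J * J) ^ (p/2 : ℝ) = J ^ p := by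
      rw [show J * J = J ^ ((2:ℕ):ℝ) by rw [Real.rpow_natCast]; ring]
      rw [← Real.rpow_mul hJ0]
      congr 1
      push_cast
      ring
    rw [h2, h3] at h1
    exact h1
  calc Ip = m * (m⁻¹ * Ip) := by field_simp
    _ ≤ m * J ^ p := mul_le_mul_of_nonneg_left hfinal hmpos.le
    _ = ∫ _θ : Metric.sphere (0 : Euc N) 1, |vCheck v r| ^ p ∂(sphMeasure N) := by
        rw [integral_const, smul_eq_mul, hvCheckJ]
        rfl
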